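/- arXiv:2201.01224 — 2 statements merged into one kernel-verified Lean document; each statement's English description precedes it below -/
import Mathlib

section
/- For every n ≥ 4, the least eigenvalue of the adjacency matrix of the n-Queens' graph Q(n) equals -4. -/
/-!
Let `J_ℓ` be the 0/1 matrix recording whether two squares lie on a common line of the family `ℓ`
(rows, columns, diagonals, antidiagonals). Distinct attacking squares share exactly one line and a
square shares all four with itself, so the adjacency matrix satisfies
`A + 4 I = J_row + J_col + J_diag + J_anti`. Each `J_ℓ` is the Gram matrix of the indicator
vectors of its lines, hence positive semidefinite, which gives `λ ≥ -4`. The 4×4 pattern `X₄`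
sums to zero along every line, so each `J_ℓ` kills its translates, which are therefore
eigenvectors for `-4`.
-/

open Finset

abbrev queensRel (n : ℕ) (a b : Fin n × Fin n) : Prop :=
  a.1 = b.1 ∨ a.2 = b.2 ∨ (a.1 : ℤ) - (a.2 : ℤ) = (b.1 : ℤ) - (b.2 : ℤ) ∨
    (a.1 : ℤ) + (a.2 : ℤ) = (b.1 : ℤ) + (b.2 : ℤ)

def queensGraph (n : ℕ) : SimpleGraph (Fin n × Fin n) := SimpleGraph.fromRel (queensRel n)

instance (n : ℕ) : DecidableRel (queensGraph n).Adj := fun a b =>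
  decidable_of_iff (a ≠ b ∧ (queensRel n a b ∨ queensRel n b a)) Iff.rfl

def IsAdjEigenvalue {V : Type*} [Fintype V] [DecidableEq V] (G : SimpleGraph V)
    [DecidableRel G.Adj] (μ : ℝ) : Prop :=
  ∃ X : V → ℝ, X ≠ 0 ∧ (G.adjMatrix ℝ).mulVec X = μ • X

/-- The 4×4 pattern X₄ (0-indexed). -/
def X4 : Fin 4 × Fin 4 → ℝ := fun p =>
  if (p.1 = 0 ∧ p.2 = 1) ∨ (p.1 = 1 ∧ p.2 = 3) ∨ (p.1 = 2 ∧ p.2 = 0) ∨ (p.1 = 3 ∧ p.2 = 2)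
  then 1
  else if (p.1 = 0 ∧ p.2 = 2) ∨ (p.1 = 1 ∧ p.2 = 0) ∨ (p.1 = 2 ∧ p.2 = 3) ∨ (p.1 = 3 ∧ p.2 = 1)
  then -1 else 0

/-- The translate of `X4` with (0-indexed) upper-left corner `(a,b)`, zero elsewhere. -/
def Xab (n a b : ℕ) : Fin n × Fin n → ℝ := fun p =>
  if h : a ≤ (p.1 : ℕ) ∧ (p.1 : ℕ) ≤ a + 3 ∧ b ≤ (p.2 : ℕ) ∧ (p.2 : ℕ) ≤ b + 3 then
    X4 (⟨(p.1 : ℕ) - a, by omega⟩, ⟨(p.2 : ℕ) - b, by omega⟩)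
  else 0

section FiberMatrix

open Matrix

variable {V ι : Type*} [Fintype V] [DecidableEq ι]

def fiberMatrix (f : V → ι) : Matrix V V ℝ := of fun p q => if f p = f q then 1 else 0

theorem posSemidef_fiberMatrix (f : V → ι) : (fiberMatrix f).PosSemidef := by
  let B : Matrix V (Set.range f) ℝ := of fun p k => if f p = k then 1 else 0
  convert posSemidef_self_mul_conjTranspose B
  ext p q
  rw [mul_apply, Fintype.sum_eq_single ⟨f p, p, rfl⟩]
  · simp [fiberMatrix, B, eq_comm]
  · rintro ⟨k, _⟩ hne
    have : f p ≠ k := fun h => hne (Subtype.ext h.symm)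
    simp [B, this]

theorem fiberMatrix_mulVec_apply (f : V → ι) (X : V → ℝ) (p : V) :
    (fiberMatrix f *ᵥ X) p = ∑ q with f q = f p, X q := by
  simp [mulVec, dotProduct, fiberMatrix, sum_filter, eq_comm]

theorem fiberMatrix_mulVec_eq_zero {f : V → ι} {X : V → ℝ}
    (hX : ∀ k, ∑ q with f q = k, X q = 0) : fiberMatrix f *ᵥ X = 0 := by
  ext p
  rw [fiberMatrix_mulVec_apply, hX, Pi.zero_apply]

end FiberMatrix

open Matrix in
theorem neg_le_of_posSemidef_add_smul_one {V : Type*} [Fintype V] [DecidableEq V]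
    {A : Matrix V V ℝ} {c μ : ℝ} {X : V → ℝ} (hA : (A + c • 1).PosSemidef) (hX : X ≠ 0)
    (hμ : A *ᵥ X = μ • X) : -c ≤ μ := by
  have hXX : 0 < X ⬝ᵥ X := by simpa using dotProduct_star_self_pos_iff.mpr hX
  have hq := hA.dotProduct_mulVec_nonneg X
  rw [star_trivial, add_mulVec, smul_mulVec, one_mulVec, hμ, ← add_smul, dotProduct_smul,
    smul_eq_mul] at hq
  linarith [(mul_nonneg_iff_of_pos_right hXX).mp hq]

def queenLine {m n : ℕ} (d : ℤ × ℤ) (p : Fin m × Fin n) : ℤ := d.1 * p.1 + d.2 * p.2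

def queenDirection : Fin 4 → ℤ × ℤ := ![(1, 0), (0, 1), (1, -1), (1, 1)]

theorem queensGraph_adj_iff {n : ℕ} {p q : Fin n × Fin n} :
    (queensGraph n).Adj p q ↔ p ≠ q ∧ queensRel n p q := by
  simp only [queensGraph, SimpleGraph.fromRel_adj, queensRel]
  grind

open Matrix in
theorem adjMatrix_queensGraph_add_smul_one (n : ℕ) :
    (queensGraph n).adjMatrix ℝ + (4 : ℝ) • 1 = ∑ i, fiberMatrix (queenLine (queenDirection i)) := by
  ext ⟨⟨a, ha⟩, ⟨b, hb⟩⟩ ⟨⟨c, hc⟩, ⟨d, hd⟩⟩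
  simp only [Matrix.add_apply, Matrix.smul_apply, one_apply, Matrix.sum_apply,
    SimpleGraph.adjMatrix_apply, queensGraph_adj_iff, queensRel, fiberMatrix, of_apply,
    Fin.sum_univ_four, queenDirection, queenLine, Matrix.cons_val, Prod.mk.injEq, Fin.mk.injEq]
  by_cases h1 : a = c <;> by_cases h2 : b = d <;> by_cases h3 : (a : ℤ) - b = c - d <;>
    by_cases h4 : (a : ℤ) + b = c + d <;>
    simp [h1, h2, h3, h4, ← sub_eq_add_neg] <;> first | omega | norm_num

theorem sum_filter_queenLine_X4 (i : Fin 4) (k : ℤ) :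
    ∑ r with queenLine (queenDirection i) r = k, X4 r = 0 := by
  fin_cases i <;>
    simp [sum_filter, Fintype.sum_prod_type, Fin.sum_univ_four, X4, queenDirection, queenLine] <;>
    split_ifs <;> first | omega | norm_num

section Translate

variable {n a b : ℕ}

def boardShift (ha : a + 4 ≤ n) (hb : b + 4 ≤ n) (r : Fin 4 × Fin 4) : Fin n × Fin n :=
  (⟨a + r.1, by omega⟩, ⟨b + r.2, by omega⟩)

variable (ha : a + 4 ≤ n) (hb : b + 4 ≤ n)
include ha hb

theorem boardShift_injective : Function.Injective (boardShift ha hb) := by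
  intro r s h
  simp only [boardShift, Prod.mk.injEq, Fin.mk.injEq, Nat.add_left_cancel_iff] at h
  exact Prod.ext (Fin.ext h.1) (Fin.ext h.2)

theorem queenLine_boardShift (d : ℤ × ℤ) (r : Fin 4 × Fin 4) :
    queenLine d (boardShift ha hb r) = d.1 * a + d.2 * b + queenLine d r := by
  simp only [queenLine, boardShift]
  push_cast
  ring

theorem Xab_boardShift (r : Fin 4 × Fin 4) : Xab n a b (boardShift ha hb r) = X4 r := by
  rw [Xab, dif_pos (by simp only [boardShift]; omega)]
  congr <;> simp [boardShift]

theorem Xab_eq_zero_of_notMem_range {q : Fin n × Fin n}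
    (hq : q ∉ Set.range (boardShift ha hb)) : Xab n a b q = 0 := by
  refine dif_neg fun h => hq ⟨(⟨q.1 - a, by omega⟩, ⟨q.2 - b, by omega⟩), ?_⟩
  ext <;> simp only [boardShift] <;> omega

theorem sum_filter_Xab (P : Fin n × Fin n → Prop) [DecidablePred P] :
    ∑ q with P q, Xab n a b q = ∑ r with P (boardShift ha hb r), X4 r := by
  symm
  refine sum_of_injOn (boardShift ha hb) (boardShift_injective ha hb).injOn ?_ ?_ ?_
  · intro r hr
    simpa using hr
  · intro q hq hq'
    apply Xab_eq_zero_of_notMem_range ha hb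
    rintro ⟨r, rfl⟩
    exact hq' ⟨r, by simpa using hq, rfl⟩
  · intro r _
    rw [Xab_boardShift]

theorem sum_filter_queenLine_Xab (i : Fin 4) (k : ℤ) :
    ∑ q with queenLine (queenDirection i) q = k, Xab n a b q = 0 := by
  rw [sum_filter_Xab ha hb]
  simp_rw [queenLine_boardShift, ← eq_sub_iff_add_eq']
  exact sum_filter_queenLine_X4 i _

open Matrix in
theorem adjMatrix_mulVec_Xab :
    (queensGraph n).adjMatrix ℝ *ᵥ Xab n a b = (-4 : ℝ) • Xab n a b := by
  have h := congrArg (· *ᵥ Xab n a b) (adjMatrix_queensGraph_add_smul_one n)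
  simp only [add_mulVec, smul_mulVec, one_mulVec, sum_mulVec,
    fiberMatrix_mulVec_eq_zero (sum_filter_queenLine_Xab ha hb _),
    Finset.sum_const_zero] at h
  rw [eq_neg_of_add_eq_zero_left h, neg_smul]

theorem Xab_ne_zero : Xab n a b ≠ 0 := by
  intro h
  simpa [Xab_boardShift, X4] using congrFun h (boardShift ha hb (0, 1))

end Translate

/-- the least eigenvalue of the n-Queens' graph equals `-4` for `n ≥ 4`. -/
theorem queens_least_eigenvalue (n : ℕ) (h : 4 ≤ n) :
    IsAdjEigenvalue (queensGraph n) (-4) ∧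
      ∀ μ : ℝ, IsAdjEigenvalue (queensGraph n) μ → (-4 : ℝ) ≤ μ := by
  have h0 : 0 + 4 ≤ n := by omega
  refine ⟨⟨Xab n 0 0, Xab_ne_zero h0 h0, adjMatrix_mulVec_Xab h0 h0⟩, ?_⟩
  rintro μ ⟨X, hX, hμ⟩
  refine neg_le_of_posSemidef_add_smul_one ?_ hX hμ
  rw [adjMatrix_queensGraph_add_smul_one]
  exact Matrix.posSemidef_sum _ fun i _ => posSemidef_fiberMatrix _
end

section
/- Every eigenvalue of the n-Queens' graph Q(n), for n ≥ 1, is at least -4. -/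
open Finset

/-!
Every square lies on exactly one row, column, diagonal and antidiagonal, and two distinct squares
share exactly one of these lines if they attack each other and none otherwise. Hence `A + 4 I`
is the sum, over the four directions, of the 0/1 matrices of "lying on the same line"; each of
these is positive semidefinite (a Gram matrix of indicator vectors), so `xᵀ A x ≥ -4 ‖x‖²` for all `x`.
-/

open Matrix

theorem Matrix.PosSemidef.nonneg_of_mulVec_eq_smul {V : Type*} [Fintype V] {M : Matrix V V ℝ}
    (hM : M.PosSemidef) {x : V → ℝ} (hx : x ≠ 0) {μ : ℝ} (h : M *ᵥ x = μ • x) : 0 ≤ μ := by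
  have hq := hM.dotProduct_mulVec_nonneg x
  rw [h, dotProduct_smul, smul_eq_mul, star_trivial] at hq
  exact nonneg_of_mul_nonneg_left hq (dotProduct_star_self_pos_iff.mpr hx)

/-- `(1 : Matrix α α ℝ).submatrix (g i) (g i)` is the 0/1 matrix of the relation
`g i u = g i v`, so the hypothesis says that the fibres of the `g i` form an edge clique partition
of `G` in which every vertex lies in `#s` cliques (counting singletons). -/
theorem IsAdjEigenvalue.neg_card_le_of_adjMatrix_add_eq_sum {V ι α : Type*} [Fintype V]
    [DecidableEq V] [DecidableEq α] {G : SimpleGraph V} [DecidableRel G.Adj] (s : Finset ι)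
    (g : ι → V → α)
    (hG : G.adjMatrix ℝ + (#s : Matrix V V ℝ) = ∑ i ∈ s, (1 : Matrix α α ℝ).submatrix (g i) (g i))
    {μ : ℝ} (hμ : IsAdjEigenvalue G μ) : -(#s : ℝ) ≤ μ := by
  obtain ⟨x, hx, hAx⟩ := hμ
  have hpsd : (G.adjMatrix ℝ + (#s : Matrix V V ℝ)).PosSemidef :=
    hG ▸ posSemidef_sum s fun i _ ↦ PosSemidef.one.submatrix (g i)
  refine neg_le_iff_add_nonneg.mpr (hpsd.nonneg_of_mulVec_eq_smul hx ?_)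
  rw [add_mulVec, hAx, natCast_mulVec, add_smul, Nat.cast_smul_eq_nsmul]

def queensLine (n : ℕ) : Fin 4 → Fin n × Fin n → ℤ :=
  ![fun p ↦ p.1, fun p ↦ p.2, fun p ↦ p.1 - p.2, fun p ↦ p.1 + p.2]

theorem queensGraph_adjMatrix_add_four (n : ℕ) :
    (queensGraph n).adjMatrix ℝ + 4 =
      ∑ i, (1 : Matrix ℤ ℤ ℝ).submatrix (queensLine n i) (queensLine n i) := by
  ext ⟨⟨a, ha⟩, ⟨b, hb⟩⟩ ⟨⟨c, hc⟩, ⟨d, hd⟩⟩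
  simp only [Matrix.add_apply, SimpleGraph.adjMatrix_apply, Matrix.ofNat_apply, Matrix.sum_apply,
    Fin.sum_univ_four, submatrix_apply, one_apply]
  simp only [queensGraph, SimpleGraph.fromRel_adj, ne_eq, Prod.mk.injEq, Fin.mk.injEq, not_and,
    queensRel, Nat.cast_ite, Nat.cast_ofNat, CharP.cast_eq_zero, queensLine, Fin.isValue, cons_val',
    cons_val_fin_one, cons_val_zero, Nat.cast_inj, cons_val_one, Matrix.cons_val]
  split_ifs <;> first | (exfalso; omega) | norm_num

theorem queens_eigenvalue_lower_bound_general (n : ℕ) (μ : ℝ)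
    (hμ : IsAdjEigenvalue (queensGraph n) μ) : (-4 : ℝ) ≤ μ := by
  simpa using hμ.neg_card_le_of_adjMatrix_add_eq_sum univ (queensLine n)
    (by simpa using queensGraph_adjMatrix_add_four n)

/-- every eigenvalue of `Q(n)` is at least `-4`. -/
theorem queens_eigenvalue_lower_bound (n : ℕ) (h : 1 ≤ n) (μ : ℝ)
    (hμ : IsAdjEigenvalue (queensGraph n) μ) : (-4 : ℝ) ≤ μ :=
  queens_eigenvalue_lower_bound_general n μ hμ
end
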